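/- arXiv:1709.04673 — 2 statements merged into one kernel-verified Lean document; each statement's English description precedes it below -/
import Mathlib

section
/- Let T : ℝ^d → ℝ^d satisfy ‖Tx − Ty‖_ν ≤ α ‖x − y‖_ν for all x, y with α ∈ (0,1), let ε > 0, let (a_n) be a sequence in [0,1], and let (M_n), (e_n), (ê_n) be sequences in ℝ^d with ‖e_n‖_ν ≤ ε and ‖ê_n‖_ν ≤ ε for all n. Suppose (J_n) and (Ĵ_n) are sequences in ℝ^d satisfying, for all n ≥ N, J_{n+1} = J_n + a_n (T J_n − J_n + e_n + M_{n+1}) and Ĵ_{n+1} = Ĵ_n + a_n (T Ĵ_n − Ĵ_n + ê_n + M_{n+1}) (the same sequence (M_{n+1}) in both recursions). Then for all n ≥ N, ‖J_n − Ĵ_n‖_ν ≤ max( ‖J_N − Ĵ_N‖_ν , 2ε/(1−α) ). -/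
lemma stmt7_aux {d : ℕ} (ν : Fin d → ℝ) (z : EuclideanSpace ℝ (Fin d)) (i : Fin d) :
    |z i| / ν i ≤ ⨆ j, |z j| / ν j :=
  le_ciSup (f := fun j => |z j| / ν j) (Set.Finite.bddAbove (Set.finite_range _)) i

/-- comparison of two coupled approximate value iteration recursions.
If `T` is an `α`-contraction (α ∈ (0,1)) in the weighted max-norm
`‖x‖_ν = max_i |x i| / ν i`, the step sizes satisfy `a n ∈ [0,1]`, the approximation
errors satisfy `‖e n‖_ν ≤ ε` and `‖ê n‖_ν ≤ ε`, and for `n ≥ N`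
`J (n+1) = J n + a n • (T (J n) - J n + e n + M (n+1))` and
`Ĵ (n+1) = Ĵ n + a n • (T (Ĵ n) - Ĵ n + ê n + M (n+1))` (same noise sequence), then
for all `n ≥ N`, `‖J n - Ĵ n‖_ν ≤ max ‖J N - Ĵ N‖_ν (2ε/(1-α))`. -/
theorem stmt_7 {d : ℕ} (ν : Fin d → ℝ) (hν : ∀ i, 0 < ν i)
    (T : EuclideanSpace ℝ (Fin d) → EuclideanSpace ℝ (Fin d))
    (α : ℝ) (hα0 : 0 < α) (hα1 : α < 1)
    (hT : ∀ x y, (⨆ i, |(T x - T y) i| / ν i) ≤ α * ⨆ i, |(x - y) i| / ν i)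
    (ε : ℝ) (hε : 0 < ε)
    (a : ℕ → ℝ) (ha : ∀ n, a n ∈ Set.Icc (0 : ℝ) 1)
    (M e ehat : ℕ → EuclideanSpace ℝ (Fin d))
    (he : ∀ n, (⨆ i, |e n i| / ν i) ≤ ε)
    (hehat : ∀ n, (⨆ i, |ehat n i| / ν i) ≤ ε)
    (J Jhat : ℕ → EuclideanSpace ℝ (Fin d)) (N : ℕ)
    (hJ : ∀ n, N ≤ n → J (n + 1) = J n + a n • (T (J n) - J n + e n + M (n + 1)))
    (hJhat : ∀ n, N ≤ n →
      Jhat (n + 1) = Jhat n + a n • (T (Jhat n) - Jhat n + ehat n + M (n + 1))) :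
    ∀ n, N ≤ n → (⨆ i, |(J n - Jhat n) i| / ν i) ≤
      max (⨆ i, |(J N - Jhat N) i| / ν i) (2 * ε / (1 - α)) := by
  set B := max (⨆ i, |(J N - Jhat N) i| / ν i) (2 * ε / (1 - α)) with hB
  have h1α : 0 < 1 - α := by linarith
  have hBpos : 0 < B := lt_of_lt_of_le (by positivity) (le_max_right _ _)
  have hB2 : 2 * ε ≤ (1 - α) * B := by
    have := le_max_right (⨆ i, |(J N - Jhat N) i| / ν i) (2 * ε / (1 - α))
    rw [div_le_iff₀ h1α] at this
    nlinarith
  intro n hn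
  induction n with
  | zero => simp_all
  | succ n ih =>
    rcases Nat.lt_or_ge N (n + 1) with h | h
    · have hn' : N ≤ n := Nat.lt_succ_iff.mp h
      have IH := ih hn'
      have ha0 := (ha n).1
      have ha1 := (ha n).2
      -- key pointwise estimate
      apply Real.iSup_le _ hBpos.le
      intro i
      have hνi := hν i
      have hdiff : (J (n+1) - Jhat (n+1)) i
          = (1 - a n) * (J n - Jhat n) i + a n * (T (J n) - T (Jhat n)) i
            + a n * (e n i - ehat n i) := by
        rw [hJ n hn', hJhat n hn']
        simp only [PiLp.sub_apply, PiLp.add_apply, PiLp.smul_apply, smul_eq_mul]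
        ring
      have hT' : |(T (J n) - T (Jhat n)) i| / ν i ≤ α * B := by
        calc |(T (J n) - T (Jhat n)) i| / ν i
            ≤ ⨆ j, |(T (J n) - T (Jhat n)) j| / ν j := stmt7_aux ν _ i
          _ ≤ α * ⨆ j, |(J n - Jhat n) j| / ν j := hT _ _
          _ ≤ α * B := by nlinarith
      have hJd : |(J n - Jhat n) i| / ν i ≤ B :=
        le_trans (stmt7_aux ν _ i) IH
      have he' : |e n i| / ν i ≤ ε := le_trans (stmt7_aux ν _ i) (he n)
      have hhat' : |ehat n i| / ν i ≤ ε := le_trans (stmt7_aux ν _ i) (hehat n)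
      have habs : |(J (n+1) - Jhat (n+1)) i|
          ≤ (1 - a n) * |(J n - Jhat n) i| + a n * |(T (J n) - T (Jhat n)) i|
            + a n * (|e n i| + |ehat n i|) := by
        rw [hdiff]
        have h3 : |e n i - ehat n i| ≤ |e n i| + |ehat n i| := abs_sub _ _
        calc |(1 - a n) * (J n - Jhat n) i + a n * (T (J n) - T (Jhat n)) i
              + a n * (e n i - ehat n i)|
            ≤ |(1 - a n) * (J n - Jhat n) i + a n * (T (J n) - T (Jhat n)) i|
              + |a n * (e n i - ehat n i)| := abs_add_le _ _
          _ ≤ |(1 - a n) * (J n - Jhat n) i| + |a n * (T (J n) - T (Jhat n)) i|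
              + |a n * (e n i - ehat n i)| := by linarith [abs_add_le ((1 - a n) * (J n - Jhat n) i) (a n * (T (J n) - T (Jhat n)) i)]
          _ ≤ (1 - a n) * |(J n - Jhat n) i| + a n * |(T (J n) - T (Jhat n)) i|
              + a n * (|e n i| + |ehat n i|) := by
              rw [abs_mul, abs_mul, abs_mul, abs_of_nonneg (by linarith : (0:ℝ) ≤ 1 - a n),
                abs_of_nonneg ha0]
              nlinarith [abs_nonneg (a n)]
      have : |(J (n+1) - Jhat (n+1)) i| / ν i
          ≤ (1 - a n) * (|(J n - Jhat n) i| / ν i)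
            + a n * (|(T (J n) - T (Jhat n)) i| / ν i)
            + a n * (|e n i| / ν i + |ehat n i| / ν i) := by
        rw [div_le_iff₀ hνi]
        calc |(J (n+1) - Jhat (n+1)) i| ≤ _ := habs
          _ = ((1 - a n) * (|(J n - Jhat n) i| / ν i)
              + a n * (|(T (J n) - T (Jhat n)) i| / ν i)
              + a n * (|e n i| / ν i + |ehat n i| / ν i)) * ν i := by
            field_simp
      have ha0' : 0 ≤ a n := ha0
      nlinarith [this, hT', hJd, he', hhat', hB2]
    · -- n + 1 = N
      have : n + 1 = N := le_antisymm h hn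
      rw [this]
      exact le_max_left _ _
end

section
/- Let B and C be open bounded subsets of ℝ^d with closure(B) ⊂ C. Let ρ be a metric on ℝ^d such that ‖x − y‖ ≤ C₀ ρ(x,y) for all x, y and some C₀ > 0 (‖·‖ the Euclidean norm). For each n let G_n : ℝ^d → (subsets of ℝ^d) have nonempty values with ρ-diameter at most D (ρ(u,v) ≤ D for all u, v ∈ G_n(x)) and satisfy the Hausdorff contraction H_ρ(G_n(x), G_n(y)) ≤ α ρ(x,y) for all x, y, where α ∈ (0,1) and D > 0 are fixed. Let π : ℝ^d → ℝ^d satisfy π(z) = z for z ∈ C and π(z) ∈ closure(B) for z ∉ C. Suppose (x_n) and (x̃_n) are sequences with x_{n+1} ∈ G_n(x_n) and x̃_{n+1} ∈ G_n(π(x̃_n)) for all n, and suppose x̃_n converges to some x* ∈ B. Then (x_n) is bounded: sup_{n ≥ 0} ‖x_n‖ < ∞. -/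
open Filter
open scoped Topology

/-- Hausdorff distance between two sets with respect to a distance function `ρ`:
`H_ρ(A,B) = max (sup_{a ∈ A} inf_{b ∈ B} ρ a b) (sup_{b ∈ B} inf_{a ∈ A} ρ a b)`. -/
noncomputable def hausdorffRho {X : Type*} (ρ : X → X → ℝ) (A B : Set X) : ℝ :=
  max (sSup ((fun a => sInf ((fun b => ρ a b) '' B)) '' A))
      (sSup ((fun b => sInf ((fun a => ρ a b) '' A)) '' B))

/-- stability via comparison with a convergent projective scheme.
`B`, `C` are open bounded subsets of `ℝ^d` with `closure B ⊆ C`; `ρ` is a metric on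
`ℝ^d` dominating the Euclidean norm (`‖x - y‖ ≤ C₀ ρ x y`); each `G n` has nonempty
values of `ρ`-diameter at most `D` and is an `α`-contraction in the `ρ`-Hausdorff
distance (`α ∈ (0,1)`); `π` is the projection map fixing `C` and sending points
outside `C` into `closure B`. If `x (n+1) ∈ G n (x n)`, `x̃ (n+1) ∈ G n (π (x̃ n))`,
and `x̃ n → x* ∈ B`, then `(x n)` is bounded. -/
theorem stmt_10 {d : ℕ}
    (B C : Set (EuclideanSpace ℝ (Fin d)))
    (hBopen : IsOpen B) (hBbdd : Bornology.IsBounded B)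
    (hCopen : IsOpen C) (hCbdd : Bornology.IsBounded C)
    (hBC : closure B ⊆ C)
    (ρ : EuclideanSpace ℝ (Fin d) → EuclideanSpace ℝ (Fin d) → ℝ)
    (hρ_nonneg : ∀ x y, 0 ≤ ρ x y)
    (hρ_self : ∀ x, ρ x x = 0)
    (hρ_eq : ∀ x y, ρ x y = 0 → x = y)
    (hρ_symm : ∀ x y, ρ x y = ρ y x)
    (hρ_tri : ∀ x y z, ρ x z ≤ ρ x y + ρ y z)
    (C₀ : ℝ) (hC₀ : 0 < C₀)
    (hρ_dom : ∀ x y, ‖x - y‖ ≤ C₀ * ρ x y)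
    (α D : ℝ) (hα0 : 0 < α) (hα1 : α < 1) (hD : 0 < D)
    (G : ℕ → EuclideanSpace ℝ (Fin d) → Set (EuclideanSpace ℝ (Fin d)))
    (hGne : ∀ n x, (G n x).Nonempty)
    (hGdiam : ∀ n x, ∀ u ∈ G n x, ∀ v ∈ G n x, ρ u v ≤ D)
    (hGcontr : ∀ n x y, hausdorffRho ρ (G n x) (G n y) ≤ α * ρ x y)
    (π : EuclideanSpace ℝ (Fin d) → EuclideanSpace ℝ (Fin d))
    (hπ_in : ∀ z ∈ C, π z = z)
    (hπ_out : ∀ z, z ∉ C → π z ∈ closure B)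
    (x xt : ℕ → EuclideanSpace ℝ (Fin d))
    (hx : ∀ n, x (n + 1) ∈ G n (x n))
    (hxt : ∀ n, xt (n + 1) ∈ G n (π (xt n)))
    (xstar : EuclideanSpace ℝ (Fin d)) (hxstar : xstar ∈ B)
    (hconv : Tendsto xt atTop (𝓝 xstar)) :
    ∃ M : ℝ, ∀ n, ‖x n‖ ≤ M := by
  -- Key estimate: points of G n u and G n v are within α ρ u v + D
  have key : ∀ n u v, ∀ a ∈ G n u, ∀ b ∈ G n v, ρ a b ≤ α * ρ u v + D := by
    intro n u v a ha b hb
    obtain ⟨b0, hb0⟩ := hGne n v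
    have h1 : ρ a b - D ≤ sInf ((fun b' => ρ a b') '' G n v) := by
      apply le_csInf ((hGne n v).image _)
      rintro _ ⟨b', hb', rfl⟩
      have := hρ_tri a b' b
      have hD' := hGdiam n v b' hb' b hb
      linarith
    have h2 : sInf ((fun b' => ρ a b') '' G n v) ≤
        sSup ((fun a' => sInf ((fun b' => ρ a' b') '' G n v)) '' G n u) := by
      apply le_csSup _ (Set.mem_image_of_mem _ ha)
      refine ⟨ρ a b0 + D, ?_⟩
      rintro _ ⟨a', ha', rfl⟩
      have h3 : sInf ((fun b' => ρ a' b') '' G n v) ≤ ρ a' b0 :=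
        csInf_le ⟨0, by rintro _ ⟨b', _, rfl⟩; exact hρ_nonneg _ _⟩
          (Set.mem_image_of_mem _ hb0)
      have h4 : ρ a' b0 ≤ ρ a' a + ρ a b0 := hρ_tri _ _ _
      have h5 : ρ a' a ≤ D := hGdiam n u a' ha' a ha
      linarith
    have h6 : sSup ((fun a' => sInf ((fun b' => ρ a' b') '' G n v)) '' G n u) ≤
        hausdorffRho ρ (G n u) (G n v) := le_max_left _ _
    have h7 := hGcontr n u v
    linarith
  -- eventually xt n ∈ C
  have hCnhds : C ∈ 𝓝 xstar := hCopen.mem_nhds (hBC (subset_closure hxstar))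
  obtain ⟨N, hN⟩ : ∃ N, ∀ n ≥ N, xt n ∈ C := eventually_atTop.mp (hconv hCnhds)
  set r : ℕ → ℝ := fun n => ρ (x n) (xt n) with hr
  set M' : ℝ := max (r N) (D / (1 - α)) with hM'
  have hM'0 : 0 ≤ M' := le_trans (hρ_nonneg _ _) (le_max_left _ _)
  have tail : ∀ k, r (N + k) ≤ M' := by
    intro k
    induction k with
    | zero => exact le_max_left _ _
    | succ k ih =>
      have hmem : xt (N + k) ∈ C := hN _ (Nat.le_add_right _ _)
      have hproj : π (xt (N + k)) = xt (N + k) := hπ_in _ hmem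
      have hstep : r (N + (k + 1)) ≤ α * r (N + k) + D := by
        have h := key (N + k) (x (N + k)) (π (xt (N + k)))
          (x (N + k + 1)) (hx (N + k)) (xt (N + k + 1)) (hxt (N + k))
        rw [hproj] at h
        exact h
      have hDa : D / (1 - α) ≤ M' := le_max_right _ _
      have h1α : 0 < 1 - α := by linarith
      have : D ≤ (1 - α) * M' := by
        rw [div_le_iff₀ h1α] at hDa; linarith
      calc r (N + (k + 1)) ≤ α * r (N + k) + D := hstep
        _ ≤ α * M' + D := by nlinarith
        _ ≤ M' := by nlinarith
  -- xt is bounded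
  have hxtb : Bornology.IsBounded (Set.range xt) := hconv.cauchySeq.isBounded_range
  obtain ⟨K, hK⟩ := hxtb.exists_norm_le
  have hK' : ∀ n, ‖xt n‖ ≤ K := fun n => hK _ (Set.mem_range_self n)
  have hK0 : 0 ≤ K := le_trans (norm_nonneg _) (hK' 0)
  refine ⟨(∑ i ∈ Finset.range (N + 1), ‖x i‖) + (K + C₀ * M'), fun n => ?_⟩
  have hsum0 : 0 ≤ ∑ i ∈ Finset.range (N + 1), ‖x i‖ :=
    Finset.sum_nonneg fun _ _ => norm_nonneg _
  have htl0 : 0 ≤ K + C₀ * M' := by positivity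
  rcases le_or_gt n N with hn | hn
  · have : ‖x n‖ ≤ ∑ i ∈ Finset.range (N + 1), ‖x i‖ :=
      Finset.single_le_sum (f := fun i => ‖x i‖) (fun _ _ => norm_nonneg _)
        (Finset.mem_range.mpr (Nat.lt_succ_of_le hn))
    linarith
  · obtain ⟨k, rfl⟩ := Nat.exists_eq_add_of_le hn.le
    have h1 : ‖x (N + k) - xt (N + k)‖ ≤ C₀ * r (N + k) := hρ_dom _ _
    have h2 : ‖x (N + k)‖ ≤ ‖x (N + k) - xt (N + k)‖ + ‖xt (N + k)‖ := by
      have := norm_add_le (x (N + k) - xt (N + k)) (xt (N + k))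
      simpa using this
    have h3 : C₀ * r (N + k) ≤ C₀ * M' :=
      mul_le_mul_of_nonneg_left (tail k) hC₀.le
    have := hK' (N + k)
    linarith
end
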